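/- arXiv:2304.13020 — 2 statements merged into one kernel-verified Lean document; each statement's English description precedes it below -/
import Mathlib

section
/- Let G be a connected unicyclic graph on n vertices (a connected graph containing exactly one cycle) whose unique cycle is a 3-cycle, with positive real edge weights. Then the distance matrix D(G) has exactly 1 positive eigenvalue and n−1 negative eigenvalues, i.e., its inertia is (1, 0, n−1); in particular D(G) is strongly unipositive. -/
/-!
The distance matrix `D` is strictly conditionally negative definite: `xᵀ D x < 0` whenever
`x ≠ 0` and `∑ xᵢ = 0`. This is proved by removing leaves one at a time. If `v` is a leaf attached
to `u` by an edge of weight `W`, then `d(v, ·) = W + d(u, ·)`, and moving the entry `x_v` onto `u`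
raises the form by exactly `2 W x_v²`. Once no leaf is left, every degree is at least 2, and the
edge count forces the graph to be the triangle itself; there the form is
`-(α x_a² + β x_b² + γ x_c²)` with the Gromov products `α, β, γ ≥ 0`, at most one of which vanishes.

Two eigenvectors with nonnegative eigenvalues would span a plane meeting the hyperplane
`∑ xᵢ = 0`, so at most one eigenvalue is nonnegative, and
`(e_a + e_b)ᵀ D (e_a + e_b) = 2 d(a, b) > 0` forces one eigenvalue to be positive.
-/

open Matrix

/-- Number of positive eigenvalues (with multiplicity) of a real symmetric matrix. -/
noncomputable def posEig {n : ℕ} {A : Matrix (Fin n) (Fin n) ℝ} (hA : A.IsHermitian) : ℕ :=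
  Nat.card {i : Fin n // 0 < hA.eigenvalues i}

noncomputable def zeroEig {n : ℕ} {A : Matrix (Fin n) (Fin n) ℝ} (hA : A.IsHermitian) : ℕ :=
  Nat.card {i : Fin n // hA.eigenvalues i = 0}

noncomputable def negEig {n : ℕ} {A : Matrix (Fin n) (Fin n) ℝ} (hA : A.IsHermitian) : ℕ :=
  Nat.card {i : Fin n // hA.eigenvalues i < 0}

/-- Total weight of a walk: sum of weights of its edges. -/
noncomputable def walkWeight {V : Type*} {G : SimpleGraph V} (w : Sym2 V → ℝ)
    {u v : V} (p : G.Walk u v) : ℝ :=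
  (p.edges.map w).sum

/-- Weighted shortest-path distance. -/
noncomputable def wdist {V : Type*} (G : SimpleGraph V) (w : Sym2 V → ℝ) (u v : V) : ℝ :=
  sInf {x | ∃ p : G.Walk u v, walkWeight w p = x}

/-- The distance matrix of a weighted graph on `Fin n`. -/
noncomputable def distMatrix {n : ℕ} (G : SimpleGraph (Fin n)) (w : Sym2 (Fin n) → ℝ) :
    Matrix (Fin n) (Fin n) ℝ :=
  Matrix.of fun i j => wdist G w i j

namespace Matrix

variable {ι : Type*} [Fintype ι]

def CondNegDef (A : Matrix ι ι ℝ) : Prop :=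
  ∀ x : ι → ℝ, ∑ i, x i = 0 → x ≠ 0 → x ⬝ᵥ A *ᵥ x < 0

section Leaf

variable [DecidableEq ι] {A : Matrix ι ι ℝ}

lemma dotProduct_mulVec_add_single (hA : A.IsSymm) (x : ι → ℝ) (k : ι) (t : ℝ) :
    (x + Pi.single k t) ⬝ᵥ A *ᵥ (x + Pi.single k t) =
      x ⬝ᵥ A *ᵥ x + 2 * t * (A *ᵥ x) k + t ^ 2 * A k k := by
  have : x ⬝ᵥ A *ᵥ Pi.single k t = t * (A *ᵥ x) k := by
    rw [dotProduct_mulVec, ← mulVec_transpose, hA.eq, dotProduct_comm, single_dotProduct]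
  simp only [mulVec_add, dotProduct_add, add_dotProduct, this, single_dotProduct]
  simp only [mulVec_single, Pi.smul_apply, col_apply, MulOpposite.smul_eq_mul_unop,
    MulOpposite.unop_op]
  ring

lemma dotProduct_mulVec_lt_zero_of_submatrix_compl_singleton {v : ι}
    (h : (A.submatrix ((↑) : ({v}ᶜ : Set ι) → ι) (↑)).CondNegDef) {x : ι → ℝ} (hxv : x v = 0)
    (hsum : ∑ i, x i = 0) (hx : x ≠ 0) : x ⬝ᵥ A *ᵥ x < 0 := by
  have hsplit (f : ι → ℝ) : ∑ i, f i = f v + ∑ i : ({v}ᶜ : Set ι), f i :=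
    Fintype.sum_eq_add_sum_subtype_ne f v
  have hx' : (fun i : ({v}ᶜ : Set ι) => x i) ≠ 0 := fun h0 => hx <| funext fun i => by
    rcases eq_or_ne i v with rfl | hi
    · exact hxv
    · exact congrFun h0 ⟨i, hi⟩
  convert h _ (by rwa [hsplit, hxv, zero_add] at hsum) hx' using 1
  simp only [dotProduct, mulVec, submatrix_apply, hsplit, hxv, mul_zero, zero_add, zero_mul]

lemma CondNegDef.of_submatrix_compl_singleton (hA : A.IsSymm) {u v : ι} (huv : u ≠ v) {W : ℝ}
    (hW : 0 < W) (hrow : ∀ i ≠ v, A v i = A u i + W) (hdiag : A v v = A u u)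
    (h : (A.submatrix ((↑) : ({v}ᶜ : Set ι) → ι) (↑)).CondNegDef) : A.CondNegDef := by
  intro x hsum hx
  set t := x v
  set x₀ := Function.update x v 0
  have hx₀v : x₀ v = 0 := by simp [x₀]
  have hx₀ : x = x₀ + Pi.single v t := by
    ext i; rcases eq_or_ne i v with rfl | hi <;> simp [x₀, t, *]
  have hsum₀ : ∑ i, x₀ i = -t := by
    rw [hx₀] at hsum; simpa [Finset.sum_add_distrib, eq_neg_iff_add_eq_zero] using hsum
  have hrow₀ : (A *ᵥ x₀) v = (A *ᵥ x₀) u + W * ∑ i, x₀ i := by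
    simp only [mulVec, dotProduct, Finset.mul_sum, ← Finset.sum_add_distrib]
    refine Finset.sum_congr rfl fun i _ => ?_
    rcases eq_or_ne i v with rfl | hi
    · simp [hx₀v]
    · rw [hrow i hi]; ring
  set z := x₀ + Pi.single u t
  have hQ : x ⬝ᵥ A *ᵥ x = z ⬝ᵥ A *ᵥ z - 2 * W * t ^ 2 := by
    rw [hx₀, dotProduct_mulVec_add_single hA, dotProduct_mulVec_add_single hA, hrow₀, hsum₀, hdiag]
    ring
  have hzv : z v = 0 := by simp [z, hx₀v, huv.symm]
  have hzsum : ∑ i, z i = 0 := by simp [z, Finset.sum_add_distrib, hsum₀]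
  rcases eq_or_ne t 0 with ht | ht
  · have hxz : x = z := by simp [z, hx₀, ht]
    rw [hxz] at hx ⊢
    exact dotProduct_mulVec_lt_zero_of_submatrix_compl_singleton h hzv hzsum hx
  · have hz : z ⬝ᵥ A *ᵥ z ≤ 0 := by
      rcases eq_or_ne z 0 with h0 | h0
      · simp [h0]
      · exact (dotProduct_mulVec_lt_zero_of_submatrix_compl_singleton h hzv hzsum h0).le
    rw [hQ]
    nlinarith [sq_pos_of_ne_zero ht]

end Leaf

lemma single_add_single_dotProduct_mulVec [DecidableEq ι] (A : Matrix ι ι ℝ) (i j : ι) :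
    (Pi.single i 1 + Pi.single j 1) ⬝ᵥ A *ᵥ (Pi.single i 1 + Pi.single j 1) =
      A i i + A i j + A j i + A j j := by
  simp [dotProduct_add, add_dotProduct, mulVec_add, mulVec_single]
  ring

lemma exists_ne_zero_dotProduct_eq_zero_of_ne [DecidableEq ι] (s : ι → ℝ) {i j : ι}
    (hij : i ≠ j) : ∃ y : ι → ℝ, y ≠ 0 ∧ s ⬝ᵥ y = 0 ∧ ∀ k, k ≠ i → k ≠ j → y k = 0 := by
  by_cases hs : s i = 0
  · exact ⟨Pi.single i 1, by simp, by simp [hs], fun k hki _ => by simp [hki]⟩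
  · refine ⟨Pi.single i (s j) - Pi.single j (s i), fun h => hs ?_, ?_, fun k hki hkj => ?_⟩
    · simpa [hij] using congrFun h j
    · simp [dotProduct_sub, mul_comm]
    · simp [hki, hkj]

namespace IsHermitian

variable [DecidableEq ι] {A : Matrix ι ι ℝ}

lemma dotProduct_mulVec_eigenvectorUnitary (hA : A.IsHermitian) (y : ι → ℝ) :
    ((hA.eigenvectorUnitary : Matrix ι ι ℝ) *ᵥ y) ⬝ᵥ
      A *ᵥ ((hA.eigenvectorUnitary : Matrix ι ι ℝ) *ᵥ y) = ∑ i, hA.eigenvalues i * y i ^ 2 := by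
  set U : Matrix ι ι ℝ := ↑hA.eigenvectorUnitary
  have hUU : Uᵀ * U = 1 := Unitary.coe_star_mul_self hA.eigenvectorUnitary
  have hAU : A * U = U * diagonal hA.eigenvalues := by
    conv_lhs => rw [hA.spectral_theorem, Unitary.conjStarAlgAut_apply]
    simp [U, mul_assoc]
  rw [mulVec_mulVec, hAU, ← mulVec_mulVec, dotProduct_mulVec, ← mulVec_transpose, mulVec_mulVec,
    hUU, one_mulVec]
  simp only [dotProduct, mulVec_diagonal, sq, mul_left_comm]

lemma exists_eigenvalues_pos (hA : A.IsHermitian) {x : ι → ℝ} (hx : 0 < x ⬝ᵥ A *ᵥ x) :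
    ∃ i, 0 < hA.eigenvalues i := by
  set U : Matrix ι ι ℝ := ↑hA.eigenvectorUnitary
  have hUU : U * Uᵀ = 1 := Unitary.coe_mul_star_self hA.eigenvectorUnitary
  by_contra! h
  have hx' : x = U *ᵥ (Uᵀ *ᵥ x) := by rw [mulVec_mulVec, hUU, one_mulVec]
  rw [hx', hA.dotProduct_mulVec_eigenvectorUnitary] at hx
  exact hx.not_ge <| Finset.sum_nonpos fun i _ =>
    mul_nonpos_of_nonpos_of_nonneg (h i) (sq_nonneg _)

lemma eq_of_eigenvalues_nonneg (hA : A.IsHermitian) (hneg : A.CondNegDef) {i j : ι}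
    (hi : 0 ≤ hA.eigenvalues i) (hj : 0 ≤ hA.eigenvalues j) : i = j := by
  by_contra hij
  set U : Matrix ι ι ℝ := ↑hA.eigenvectorUnitary
  have hUU : Uᵀ * U = 1 := Unitary.coe_star_mul_self hA.eigenvectorUnitary
  obtain ⟨y, hy0, hys, hysupp⟩ := exists_ne_zero_dotProduct_eq_zero_of_ne (1 ᵥ* U) hij
  have hUy : U *ᵥ y ≠ 0 := fun h => hy0 <| by
    rw [← one_mulVec y, ← hUU, ← mulVec_mulVec, h, mulVec_zero]
  have hsum : ∑ k, (U *ᵥ y) k = 0 := by rw [← one_dotProduct, dotProduct_mulVec, hys]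
  have := hneg _ hsum hUy
  rw [hA.dotProduct_mulVec_eigenvectorUnitary] at this
  refine this.not_ge <| Finset.sum_nonneg fun k _ => ?_
  by_cases hki : k = i
  · subst hki; positivity
  by_cases hkj : k = j
  · subst hkj; positivity
  simp [hysupp k hki hkj]

theorem inertia_of_condNegDef {n : ℕ} {A : Matrix (Fin n) (Fin n) ℝ} (hA : A.IsHermitian)
    (hneg : A.CondNegDef) {x : Fin n → ℝ} (hx : 0 < x ⬝ᵥ A *ᵥ x) :
    posEig hA = 1 ∧ zeroEig hA = 0 ∧ negEig hA = n - 1 := by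
  obtain ⟨i, hi⟩ := hA.exists_eigenvalues_pos hx
  have hnonneg : ∀ j, 0 ≤ hA.eigenvalues j ↔ j = i := fun j =>
    ⟨fun hj => hA.eq_of_eigenvalues_nonneg hneg hj hi.le, by rintro rfl; exact hi.le⟩
  have hpos : ∀ j, 0 < hA.eigenvalues j ↔ j = i := fun j =>
    ⟨fun hj => (hnonneg j).1 hj.le, by rintro rfl; exact hi⟩
  have hnegEig : ∀ j, hA.eigenvalues j < 0 ↔ j ≠ i := fun j => by
    rw [ne_eq, ← hnonneg, not_le]
  refine ⟨?_, ?_, ?_⟩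
  · rw [posEig, Nat.card_congr (Equiv.subtypeEquivRight hpos), Nat.card_unique]
  · have : IsEmpty {j // hA.eigenvalues j = 0} :=
      ⟨fun ⟨j, hj⟩ => hi.ne' (((hnonneg j).1 hj.ge) ▸ hj)⟩
    exact Nat.card_of_isEmpty
  · rw [negEig, Nat.card_congr (Equiv.subtypeEquivRight hnegEig), Nat.card_eq_fintype_card,
      Fintype.card_subtype_compl, Fintype.card_fin, Fintype.card_unique]

end IsHermitian

end Matrix

lemma triangle_quadForm_neg {p q r x y z : ℝ} (hp : 0 < p) (hq : 0 < q) (hr : 0 < r)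
    (hpqr : p ≤ q + r) (hqpr : q ≤ p + r) (hrpq : r ≤ p + q) (hsum : x + y + z = 0)
    (hne : x ≠ 0 ∨ y ≠ 0) : p * x * y + q * x * z + r * y * z < 0 := by
  have key : p * x * y + q * x * z + r * y * z =
      -((p + q - r) * x ^ 2 + (p + r - q) * y ^ 2 + (q + r - p) * z ^ 2) / 2 := by
    obtain rfl : z = -x - y := by linarith
    ring
  have h1 : 0 ≤ (p + q - r) * x ^ 2 := mul_nonneg (by linarith) (sq_nonneg x)
  have h2 : 0 ≤ (p + r - q) * y ^ 2 := mul_nonneg (by linarith) (sq_nonneg y)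
  have h3 : 0 ≤ (q + r - p) * z ^ 2 := mul_nonneg (by linarith) (sq_nonneg z)
  rw [key, neg_div, neg_lt_zero]
  by_contra! hS
  have e1 : (p + q - r) * x ^ 2 = 0 := by linarith
  have e2 : (p + r - q) * y ^ 2 = 0 := by linarith
  have e3 : (q + r - p) * z ^ 2 = 0 := by linarith
  simp only [mul_eq_zero, sq_eq_zero_iff, sub_eq_zero] at e1 e2 e3
  rcases hne with hx | hy <;> rcases e1 with e1 | e1 <;> rcases e2 with e2 | e2 <;>
    rcases e3 with e3 | e3 <;> first | linarith | exact hx (by linarith) | exact hy (by linarith)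

open SimpleGraph

section WeightedDistance

variable {V V' : Type*} {G : SimpleGraph V} {w : Sym2 V → ℝ}

@[simp] lemma walkWeight_nil {u : V} : walkWeight w (Walk.nil : G.Walk u u) = 0 := rfl

@[simp] lemma walkWeight_cons {u x y : V} (h : G.Adj u x) (p : G.Walk x y) :
    walkWeight w (Walk.cons h p) = w s(u, x) + walkWeight w p := by
  simp [walkWeight]

@[simp] lemma walkWeight_append {u x y : V} (p : G.Walk u x) (q : G.Walk x y) :
    walkWeight w (p.append q) = walkWeight w p + walkWeight w q := by
  simp [walkWeight]

@[simp] lemma walkWeight_reverse {u x : V} (p : G.Walk u x) :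
    walkWeight w p.reverse = walkWeight w p := by
  simp [walkWeight, List.sum_reverse]

lemma walkWeight_map {G' : SimpleGraph V'} (f : G →g G') (w' : Sym2 V' → ℝ) {u x : V}
    (p : G.Walk u x) : walkWeight w' (p.map f) = walkWeight (w' ∘ Sym2.map f) p := by
  simp [walkWeight, Walk.edges_map]

lemma walkWeight_nonneg (hw : ∀ e ∈ G.edgeSet, 0 ≤ w e) {u v : V} (p : G.Walk u v) :
    0 ≤ walkWeight w p :=
  List.sum_nonneg <| by simpa using fun e he => hw e (p.edges_subset_edgeSet he)

lemma walkWeight_bypass_le [DecidableEq V] (hw : ∀ e ∈ G.edgeSet, 0 ≤ w e) {u v : V}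
    (p : G.Walk u v) : walkWeight w p.bypass ≤ walkWeight w p :=
  (p.edges_bypass_sublist_edges.map w).sum_le_sum <| by
    simpa using fun e he => hw e (p.edges_subset_edgeSet he)

lemma wdist_le (hw : ∀ e ∈ G.edgeSet, 0 ≤ w e) {u v : V} (p : G.Walk u v) :
    wdist G w u v ≤ walkWeight w p :=
  csInf_le ⟨0, by rintro x ⟨p, rfl⟩; exact walkWeight_nonneg hw p⟩ ⟨p, rfl⟩

lemma le_wdist {u v : V} (h : G.Reachable u v) {c : ℝ}
    (hc : ∀ p : G.Walk u v, c ≤ walkWeight w p) : c ≤ wdist G w u v :=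
  le_csInf (h.elim fun p => ⟨_, p, rfl⟩) <| by rintro x ⟨p, rfl⟩; exact hc p

lemma wdist_self (hw : ∀ e ∈ G.edgeSet, 0 ≤ w e) (u : V) : wdist G w u u = 0 :=
  (wdist_le hw Walk.nil).antisymm <| le_wdist .rfl (walkWeight_nonneg hw)

lemma wdist_comm (u v : V) : wdist G w u v = wdist G w v u := by
  have (u v : V) : {x | ∃ p : G.Walk u v, walkWeight w p = x} ⊆
      {x | ∃ p : G.Walk v u, walkWeight w p = x} := by
    rintro x ⟨p, rfl⟩; exact ⟨p.reverse, walkWeight_reverse p⟩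
  exact congrArg sInf ((this u v).antisymm (this v u))

lemma wdist_triangle (hw : ∀ e ∈ G.edgeSet, 0 ≤ w e) {u x y : V} (hux : G.Reachable u x)
    (hxy : G.Reachable x y) : wdist G w u y ≤ wdist G w u x + wdist G w x y := by
  suffices ∀ p : G.Walk u x, wdist G w u y - wdist G w x y ≤ walkWeight w p by
    linarith [le_wdist hux this]
  intro p
  suffices ∀ q : G.Walk x y, wdist G w u y - walkWeight w p ≤ walkWeight w q by
    linarith [le_wdist hxy this]
  intro q
  linarith [wdist_le hw (p.append q), walkWeight_append (w := w) p q]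

lemma wdist_le_weight (hw : ∀ e ∈ G.edgeSet, 0 ≤ w e) {u v : V} (h : G.Adj u v) :
    wdist G w u v ≤ w s(u, v) := by
  simpa using wdist_le hw (Walk.cons h Walk.nil)

lemma wdist_pos [Finite V] (hw : ∀ e ∈ G.edgeSet, 0 < w e) {u v : V} (h : G.Reachable u v)
    (huv : u ≠ v) : 0 < wdist G w u v := by
  obtain ⟨ε, hε, hεw⟩ : ∃ ε > 0, ∀ e ∈ G.edgeSet, ε ≤ w e := by
    rcases G.edgeSet.eq_empty_or_nonempty with hE | hE
    · exact ⟨1, one_pos, by simp [hE]⟩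
    · obtain ⟨e, he, hmin⟩ := G.edgeSet.exists_min_image w G.edgeSet.toFinite hE
      exact ⟨w e, hw e he, hmin⟩
  refine hε.trans_le <| le_wdist h fun p => ?_
  cases p with
  | nil => exact absurd rfl huv
  | cons hadj q =>
    rw [walkWeight_cons]
    linarith [hεw _ (G.mem_edgeSet.2 hadj), walkWeight_nonneg (fun e he => (hw e he).le) q]

lemma wdist_map_le {G' : SimpleGraph V'} (f : G →g G') (w' : Sym2 V' → ℝ)
    (hw : ∀ e ∈ G'.edgeSet, 0 ≤ w' e) {u v : V} (h : G.Reachable u v) :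
    wdist G' w' (f u) (f v) ≤ wdist G (w' ∘ Sym2.map f) u v :=
  le_wdist h fun p => walkWeight_map f w' p ▸ wdist_le hw (p.map f)

end WeightedDistance

section Leaf

variable {V : Type*} {G : SimpleGraph V} {w : Sym2 V → ℝ} {u v : V}

lemma exists_walk_induce_compl_singleton_le (hw : ∀ e ∈ G.edgeSet, 0 ≤ w e)
    (hv : (G.neighborSet v).Subsingleton) {x y : V} (hx : x ≠ v) (hy : y ≠ v) (p : G.Walk x y) :
    ∃ q : (G.induce {v}ᶜ).Walk ⟨x, hx⟩ ⟨y, hy⟩,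
      walkWeight (w ∘ Sym2.map (↑)) q ≤ walkWeight w p := by
  classical
  have hsupp : ∀ z ∈ p.bypass.support, z ∈ ({v}ᶜ : Set V) := by
    rintro z hz rfl
    exact p.bypass_isPath.isTrail.not_mem_support_of_subsingleton_neighborSet hx.symm hy.symm
      hv hz
  refine ⟨p.bypass.induce _ hsupp, ?_⟩
  have := walkWeight_map (Embedding.induce ({v}ᶜ : Set V)).toHom w (p.bypass.induce _ hsupp)
  rw [Walk.map_induce] at this
  exact this ▸ walkWeight_bypass_le hw p

lemma wdist_induce_compl_singleton (hw : ∀ e ∈ G.edgeSet, 0 ≤ w e)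
    (hv : (G.neighborSet v).Subsingleton) {x y : ({v}ᶜ : Set V)} (h : G.Reachable x y) :
    wdist (G.induce {v}ᶜ) (w ∘ Sym2.map (↑)) x y = wdist G w x y := by
  have hw' : ∀ e ∈ (G.induce {v}ᶜ).edgeSet, 0 ≤ (w ∘ Sym2.map (↑)) e := fun e he =>
    hw _ ((Embedding.induce _).toHom.map_mem_edgeSet he)
  refine le_antisymm (le_wdist h fun p => ?_) ?_
  · obtain ⟨q, hq⟩ := exists_walk_induce_compl_singleton_le hw hv x.2 y.2 p
    exact (wdist_le hw' q).trans hq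
  · obtain ⟨p⟩ := h
    obtain ⟨q, -⟩ := exists_walk_induce_compl_singleton_le hw hv x.2 y.2 p
    exact wdist_map_le (Embedding.induce _).toHom w hw ⟨q⟩

lemma wdist_of_neighborSet_eq_singleton (hw : ∀ e ∈ G.edgeSet, 0 ≤ w e)
    (hleaf : G.neighborSet v = {u}) (hG : G.Preconnected) {y : V} (hy : y ≠ v) :
    wdist G w v y = w s(v, u) + wdist G w u y := by
  have hvu : G.Adj v u := by simp [← mem_neighborSet, hleaf]
  refine le_antisymm ?_ (le_wdist (hG v y) fun p => ?_)
  · linarith [wdist_triangle hw (hG v u) (hG u y), wdist_le_weight hw hvu]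
  · cases p with
    | nil => exact absurd rfl hy
    | cons hadj q =>
      obtain rfl : _ = u := by simpa [← mem_neighborSet, hleaf] using hadj
      simpa using wdist_le hw q

lemma degree_eq_one_of_neighborSet_eq_singleton [Fintype (G.neighborSet v)]
    (hleaf : G.neighborSet v = {u}) : G.degree v = 1 := by
  simp [← card_neighborSet_eq_degree, hleaf]

lemma card_edgeSet_induce_compl_singleton [Finite V] (hleaf : G.neighborSet v = {u}) :
    Nat.card (G.induce {v}ᶜ).edgeSet + 1 = Nat.card G.edgeSet := by
  classical
  have := Fintype.ofFinite V
  have hcard := G.card_edgeFinset_deleteIncidenceSet v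
  rw [← card_edgeFinset_induce_compl_singleton,
    degree_eq_one_of_neighborSet_eq_singleton hleaf] at hcard
  have hvu : s(v, u) ∈ G.edgeFinset := by simp [← mem_neighborSet, hleaf]
  have := Finset.card_pos.2 ⟨_, hvu⟩
  simp only [Nat.card_eq_fintype_card, ← edgeFinset_card]
  omega

lemma ne_of_neighborSet_eq_singleton {x y z : V} (hleaf : G.neighborSet v = {u})
    (hxy : G.Adj x y) (hxz : G.Adj x z) (hyz : y ≠ z) : x ≠ v := by
  rintro rfl
  have hy : y = u := by simpa [← mem_neighborSet, hleaf] using hxy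
  have hz : z = u := by simpa [← mem_neighborSet, hleaf] using hxz
  exact hyz (hy.trans hz.symm)

lemma condNegDef_wdist_of_neighborSet_eq_singleton [Fintype V] [DecidableEq V]
    (hG : G.Preconnected) (hw : ∀ e ∈ G.edgeSet, 0 < w e) (hleaf : G.neighborSet v = {u})
    (h : (Matrix.of (wdist (G.induce {v}ᶜ) (w ∘ Sym2.map (↑)))).CondNegDef) :
    (Matrix.of (wdist G w)).CondNegDef := by
  have hw₀ : ∀ e ∈ G.edgeSet, 0 ≤ w e := fun e he => (hw e he).le
  have hvu : G.Adj v u := by simp [← mem_neighborSet, hleaf]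
  have hsub : (Matrix.of (wdist G w)).submatrix ((↑) : ({v}ᶜ : Set V) → V) (↑) =
      Matrix.of (wdist (G.induce {v}ᶜ) (w ∘ Sym2.map (↑))) := by
    ext x y
    simp [wdist_induce_compl_singleton hw₀ (hleaf ▸ Set.subsingleton_singleton) (hG x y)]
  refine CondNegDef.of_submatrix_compl_singleton (IsSymm.ext fun i j => wdist_comm j i)
    hvu.ne.symm (hw s(v, u) hvu) (fun i hi => ?_) (by simp [wdist_self hw₀]) (hsub ▸ h)
  simp [wdist_of_neighborSet_eq_singleton hw₀ hleaf hG hi, add_comm]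

end Leaf

section Unicyclic

variable {V : Type*} {G : SimpleGraph V}

lemma eq_or_eq_of_degree_eq_two [G.LocallyFinite] {x y z t : V}
    (hx : G.degree x = 2) (hyz : y ≠ z) (hxy : G.Adj x y) (hxz : G.Adj x z) (hxt : G.Adj x t) :
    t = y ∨ t = z := by
  classical
  have hsub : {y, z} ⊆ G.neighborFinset x := by simp [Finset.insert_subset_iff, hxy, hxz]
  have heq := Finset.eq_of_subset_of_card_le hsub (by simp [Finset.card_pair hyz, hx])
  simpa [← heq] using (G.mem_neighborFinset x t).2 hxt

lemma forall_eq_of_degree_eq_two [G.LocallyFinite] (hG : G.Preconnected)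
    (hdeg : ∀ x, G.degree x = 2) {a b c : V} (hab : G.Adj a b) (hbc : G.Adj b c)
    (hac : G.Adj a c) (x : V) : x = a ∨ x = b ∨ x = c := by
  have hclosed : ∀ y z, (y = a ∨ y = b ∨ y = c) → G.Adj y z → z = a ∨ z = b ∨ z = c := by
    rintro y z (rfl | rfl | rfl) hyz
    · have := eq_or_eq_of_degree_eq_two (hdeg _) hbc.ne hab hac hyz; tauto
    · have := eq_or_eq_of_degree_eq_two (hdeg _) hac.ne hab.symm hbc hyz; tauto
    · have := eq_or_eq_of_degree_eq_two (hdeg _) hab.ne hac.symm hbc.symm hyz; tauto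
  suffices ∀ {y} (p : G.Walk y x), (y = a ∨ y = b ∨ y = c) → x = a ∨ x = b ∨ x = c from
    (hG a x).elim fun p => this p (.inl rfl)
  intro y p
  induction p with
  | nil => exact id
  | cons h _ ih => exact fun hy => ih (hclosed _ _ hy h)

lemma degree_eq_two_of_two_le_degree [Fintype V] [DecidableRel G.Adj]
    (hcard : Nat.card G.edgeSet ≤ Fintype.card V) (hdeg : ∀ x, 2 ≤ G.degree x) (x : V) :
    G.degree x = 2 := by
  have hsum : ∑ y, G.degree y ≤ ∑ _y : V, 2 := by
    rw [sum_degrees_eq_twice_card_edges, Finset.sum_const, Finset.card_univ, smul_eq_mul,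
      edgeFinset_card, ← Nat.card_eq_fintype_card]
    omega
  have heq := (Finset.sum_le_sum fun y _ => hdeg y).antisymm hsum
  exact ((Finset.sum_eq_sum_iff_of_le fun y _ => hdeg y).1 heq x (Finset.mem_univ x)).symm

lemma exists_neighborSet_eq_singleton_or_forall_eq [Fintype V] (hG : G.Connected)
    (hcard : Nat.card G.edgeSet ≤ Fintype.card V) {a b c : V} (hab : G.Adj a b)
    (hbc : G.Adj b c) (hac : G.Adj a c) :
    (∃ v u, G.neighborSet v = {u}) ∨ ∀ x, x = a ∨ x = b ∨ x = c := by
  classical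
  by_cases hdeg : ∀ x, 2 ≤ G.degree x
  · exact .inr (forall_eq_of_degree_eq_two hG.preconnected
      (degree_eq_two_of_two_le_degree hcard hdeg) hab hbc hac)
  · obtain ⟨v, hv⟩ := not_forall.1 hdeg
    have : Nontrivial V := ⟨⟨a, b, hab.ne⟩⟩
    have hv1 : G.degree v = 1 := by
      have := hG.preconnected.degree_pos_of_nontrivial v
      omega
    obtain ⟨u, hvu, hu⟩ := degree_eq_one_iff_existsUnique_adj.1 hv1
    exact .inl ⟨v, u, Set.eq_singleton_iff_unique_mem.2 ⟨hvu, hu⟩⟩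

lemma condNegDef_wdist_of_forall_eq [Fintype V] {w : Sym2 V → ℝ} (hG : G.Connected)
    (hw : ∀ e ∈ G.edgeSet, 0 < w e) {a b c : V} (hab : G.Adj a b) (hbc : G.Adj b c)
    (hac : G.Adj a c) (hall : ∀ x, x = a ∨ x = b ∨ x = c) :
    (Matrix.of (wdist G w)).CondNegDef := by
  classical
  intro x hsum hx
  have hw₀ : ∀ e ∈ G.edgeSet, 0 ≤ w e := fun e he => (hw e he).le
  have huniv : (Finset.univ : Finset V) = {a, b, c} := by
    ext i; simpa using hall i
  have hsum₃ (f : V → ℝ) : ∑ i, f i = f a + f b + f c := by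
    rw [huniv, Finset.sum_insert (by simp [hab.ne, hac.ne]), Finset.sum_pair hbc.ne, add_assoc]
  have hQ : x ⬝ᵥ Matrix.of (wdist G w) *ᵥ x = 2 * (wdist G w a b * x a * x b +
      wdist G w a c * x a * x c + wdist G w b c * x b * x c) := by
    simp only [dotProduct, mulVec, Matrix.of_apply, hsum₃, wdist_self hw₀, wdist_comm b a,
      wdist_comm c a, wdist_comm c b]
    ring
  have hsum' : x a + x b + x c = 0 := hsum₃ x ▸ hsum
  have hne : x a ≠ 0 ∨ x b ≠ 0 := by
    by_contra! h
    have hc : x c = 0 := by linarith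
    exact hx (funext fun i => by rcases hall i with rfl | rfl | rfl <;> simp [h, hc])
  have hpos {i j : V} (h : G.Adj i j) := wdist_pos hw (hG.preconnected i j) h.ne
  have htri (i j k : V) := wdist_triangle hw₀ (hG.preconnected i j) (hG.preconnected j k)
  have := triangle_quadForm_neg (hpos hab) (hpos hac) (hpos hbc) (wdist_comm c b ▸ htri a c b)
    (htri a b c) (wdist_comm b a ▸ htri b a c) hsum' hne
  rw [hQ]
  linarith

theorem condNegDef_wdist [Fintype V] {w : Sym2 V → ℝ} (hG : G.Connected)
    (hcard : Nat.card G.edgeSet ≤ Fintype.card V) {a b c : V} (hab : G.Adj a b)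
    (hbc : G.Adj b c) (hac : G.Adj a c) (hw : ∀ e ∈ G.edgeSet, 0 < w e) :
    (Matrix.of (wdist G w)).CondNegDef := by
  induction hn : Fintype.card V using Nat.strong_induction_on generalizing V with
  | _ n ih =>
    rcases exists_neighborSet_eq_singleton_or_forall_eq hG hcard hab hbc hac with
      ⟨v, u, hleaf⟩ | hall
    · classical
      have ha : a ≠ v := ne_of_neighborSet_eq_singleton hleaf hab hac hbc.ne
      have hb : b ≠ v := ne_of_neighborSet_eq_singleton hleaf hab.symm hbc hac.ne
      have hc : c ≠ v := ne_of_neighborSet_eq_singleton hleaf hac.symm hbc.symm hab.ne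
      have hG' : (G.induce {v}ᶜ).Connected := hG.induce_compl_singleton_of_degree_eq_one
        (degree_eq_one_of_neighborSet_eq_singleton hleaf)
      have hcardV : Fintype.card ({v}ᶜ : Set V) + 1 = n := by
        rw [Fintype.card_compl_set, ← hn, Set.card_singleton]
        have := Fintype.card_pos_iff.2 ⟨v⟩
        omega
      have hcardE := card_edgeSet_induce_compl_singleton hleaf
      refine condNegDef_wdist_of_neighborSet_eq_singleton hG.preconnected hw hleaf ?_
      exact ih _ (by omega) hG' (by omega) (a := ⟨a, ha⟩) (b := ⟨b, hb⟩) (c := ⟨c, hc⟩) hab hbc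
        hac (fun e he => hw _ ((Embedding.induce _).toHom.map_mem_edgeSet he)) rfl
    · exact condNegDef_wdist_of_forall_eq hG hw hab hbc hac hall

end Unicyclic

/-- A connected unicyclic graph (connected with exactly as many edges as
vertices) whose unique cycle is a 3-cycle, with positive edge weights, has a strongly
unipositive distance matrix: inertia `(1, 0, n-1)`. -/
theorem unicyclic_triangle_inertia (n : ℕ) (G : SimpleGraph (Fin n))
    (hconn : G.Connected) (huni : Nat.card G.edgeSet = n)
    (a b c : Fin n) (hab : G.Adj a b) (hbc : G.Adj b c) (hac : G.Adj a c)
    (w : Sym2 (Fin n) → ℝ) (hw : ∀ e ∈ G.edgeSet, 0 < w e)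
    (hD : (distMatrix G w).IsHermitian) :
    posEig hD = 1 ∧ zeroEig hD = 0 ∧ negEig hD = n - 1 := by
  have hw₀ : ∀ e ∈ G.edgeSet, 0 ≤ w e := fun e he => (hw e he).le
  have hcard : Nat.card G.edgeSet ≤ Fintype.card (Fin n) := by rw [huni, Fintype.card_fin]
  refine hD.inertia_of_condNegDef (condNegDef_wdist hconn hcard hab hbc hac hw)
    (x := Pi.single a 1 + Pi.single b 1) ?_
  rw [single_add_single_dotProduct_mulVec]
  simp only [distMatrix, of_apply, wdist_self hw₀, wdist_comm b a]
  linarith [wdist_pos hw (hconn.preconnected a b) hab.ne]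
end

section
/- Let n ≥ 3, let d_1, ..., d_{n−1} be positive real numbers, and let z be a real number with |z| < 2·min(d_1, d_2). Let M be the n×n real symmetric matrix with M_{1,1} = 0, M_{1,i+1} = M_{i+1,1} = d_i for 1 ≤ i ≤ n−1, M_{i+1,i+1} = −2 d_i for 1 ≤ i ≤ n−1, M_{2,3} = M_{3,2} = z, and all other entries 0. Then M has exactly 1 positive eigenvalue and n−1 negative eigenvalues. -/
open Matrix

/-!
On the hyperplane `x 0 = 0` the quadratic form of `M` is that of its trailing block
`diagonal (-2 • d) + z (E₀₁ + E₁₀)`, which is negative definite since `|z| < 2 min (d 0) (d 1)`.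
Writing `x ⬝ᵥ M *ᵥ x = ∑ λᵢ cᵢ²` in an orthonormal eigenbasis, a subspace on which the form is
negative definite has dimension at most the number of negative eigenvalues, so at least `n - 1`
eigenvalues are negative. The form is positive at `2 e₀ + e₁`, so one eigenvalue is positive.
-/

open WithLp Module

theorem Module.Basis.finrank_le_card_of_repr_eq_zero {ι K V : Type*} [Fintype ι] [Field K]
    [AddCommGroup V] [Module K V] (b : Basis ι K V) (p : ι → Prop) (W : Submodule K V)
    (hW : ∀ x ∈ W, (∀ i, p i → b.repr x i = 0) → x = 0) :
    finrank K W ≤ Nat.card {i // p i} := by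
  let f : W →ₗ[K] {i // p i} → K := LinearMap.pi fun i => b.coord i ∘ₗ W.subtype
  have hf : Function.Injective f := by
    rw [← LinearMap.ker_eq_bot, LinearMap.ker_eq_bot']
    exact fun x hx => Subtype.ext (hW x x.2 fun i hi => congrFun hx ⟨i, hi⟩)
  classical
  simpa [Nat.card_eq_fintype_card] using LinearMap.finrank_le_finrank_of_injective hf

theorem Nat.card_pos_add_card_eq_zero_add_card_neg {ι : Type*} [Fintype ι] (f : ι → ℝ) :
    Nat.card {i // 0 < f i} + Nat.card {i // f i = 0} + Nat.card {i // f i < 0} =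
      Fintype.card ι := by
  classical
  simp only [Nat.card_eq_fintype_card, Fintype.card_subtype]
  rw [← Finset.card_union_of_disjoint, ← Finset.card_union_of_disjoint, ← Finset.filter_or,
    ← Finset.filter_or, Finset.filter_true_of_mem, Finset.card_univ]
  · intro i _
    rcases lt_trichotomy (f i) 0 with h | h | h <;> simp [h]
  all_goals simp only [Finset.disjoint_left, Finset.mem_union, Finset.mem_filter]; grind

namespace Matrix

theorem single_add_single_dotProduct_mulVec_s8 {R n : Type*} [CommSemiring R] [Fintype n]
    [DecidableEq n] (M : Matrix n n R) (i j : n) (a b : R) :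
    (Pi.single i a + Pi.single j b) ⬝ᵥ M *ᵥ (Pi.single i a + Pi.single j b) =
      a * a * M i i + a * b * M i j + b * a * M j i + b * b * M j j := by
  simp only [mulVec_add, mulVec_single, op_smul_eq_smul, dotProduct_add, dotProduct_smul,
    add_dotProduct, single_dotProduct, col_apply, smul_eq_mul]
  ring

theorem dotProduct_mulVec_eq_submatrix_succ_of_apply_zero {R : Type*} [CommSemiring R] {k : ℕ}
    (M : Matrix (Fin (k + 1)) (Fin (k + 1)) R) {x : Fin (k + 1) → R} (hx : x 0 = 0) :
    x ⬝ᵥ M *ᵥ x = Fin.tail x ⬝ᵥ M.submatrix Fin.succ Fin.succ *ᵥ Fin.tail x := by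
  simp [dotProduct, mulVec, Fin.sum_univ_succ, hx, Fin.tail]

theorem dotProduct_diagonal_add_single_mulVec {R : Type*} [CommSemiring R] {k : ℕ}
    (v : Fin (k + 2) → R) (z : R) (y : Fin (k + 2) → R) :
    y ⬝ᵥ (diagonal v + single 0 1 z + single 1 0 z) *ᵥ y =
      ∑ i, v i * y i ^ 2 + 2 * z * y 0 * y 1 := by
  have hdiag : y ⬝ᵥ diagonal v *ᵥ y = ∑ i, v i * y i ^ 2 :=
    Finset.sum_congr rfl fun i _ => by rw [mulVec_diagonal]; ring
  simp only [add_mulVec, dotProduct_add, hdiag, single_mulVec, ← Pi.single.eq_def,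
    dotProduct_single]
  ring

theorem two_mul_mul_lt_two_mul_sum_mul_sq {k : ℕ} (d : Fin (k + 2) → ℝ) (hd : ∀ i, 0 < d i)
    {z : ℝ} (hz : |z| < 2 * min (d 0) (d 1)) {y : Fin (k + 2) → ℝ} (hy : y ≠ 0) :
    2 * z * y 0 * y 1 < 2 * ∑ i, d i * y i ^ 2 := by
  rw [Fin.sum_univ_succ, Fin.sum_univ_succ, Fin.succ_zero_eq_one]
  set tail := ∑ i : Fin k, d i.succ.succ * y i.succ.succ ^ 2
  by_cases hy01 : y 0 = 0 ∧ y 1 = 0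
  · obtain ⟨j, hj⟩ := Function.ne_iff.mp hy
    have htail : 0 < tail := by
      refine Finset.sum_pos' (fun i _ => by have := hd i.succ.succ; positivity) ?_
      induction j using Fin.cases with
      | zero => exact absurd hy01.1 hj
      | succ j => induction j using Fin.cases with
        | zero => exact absurd hy01.2 hj
        | succ j => exact ⟨j, Finset.mem_univ _, mul_pos (hd _) (pow_two_pos_of_ne_zero hj)⟩
    rw [hy01.1, hy01.2]
    linarith
  · have htail : 0 ≤ tail := Finset.sum_nonneg fun i _ => by have := hd i.succ.succ; positivity
    have hs : 0 < y 0 ^ 2 + y 1 ^ 2 := by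
      rcases not_and_or.mp hy01 with h | h <;> positivity
    have hcross : 2 * z * y 0 * y 1 ≤ |z| * (y 0 ^ 2 + y 1 ^ 2) :=
      calc 2 * z * y 0 * y 1 ≤ |2 * z * y 0 * y 1| := le_abs_self _
        _ = |z| * (2 * |y 0| * |y 1|) := by simp only [abs_mul, abs_two]; ring
        _ ≤ |z| * (y 0 ^ 2 + y 1 ^ 2) := by
          gcongr
          simpa only [sq_abs] using two_mul_le_add_sq |y 0| |y 1|
    have hmin : 2 * min (d 0) (d 1) * (y 0 ^ 2 + y 1 ^ 2) ≤
        2 * (d 0 * y 0 ^ 2 + d 1 * y 1 ^ 2) := by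
      nlinarith [min_le_left (d 0) (d 1), min_le_right (d 0) (d 1), sq_nonneg (y 0),
        sq_nonneg (y 1)]
    nlinarith [mul_lt_mul_of_pos_right hz hs]

theorem dotProduct_diagonal_add_single_mulVec_neg {k : ℕ} {d : Fin (k + 2) → ℝ}
    (hd : ∀ i, 0 < d i) {z : ℝ} (hz : |z| < 2 * min (d 0) (d 1)) {y : Fin (k + 2) → ℝ}
    (hy : y ≠ 0) :
    y ⬝ᵥ (diagonal (fun i => -2 * d i) + single 0 1 z + single 1 0 z) *ᵥ y < 0 := by
  have hsum : ∑ i, -2 * d i * y i ^ 2 = -(2 * ∑ i, d i * y i ^ 2) := by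
    rw [Finset.mul_sum, ← Finset.sum_neg_distrib]
    exact Finset.sum_congr rfl fun i _ => by ring
  rw [dotProduct_diagonal_add_single_mulVec, hsum]
  linarith [two_mul_mul_lt_two_mul_sum_mul_sq d hd hz hy]

theorem eq_diagonal_add_single_add_single {R : Type*} [AddZeroClass R] {k : ℕ}
    {N : Matrix (Fin (k + 2)) (Fin (k + 2)) R} {v : Fin (k + 2) → R} {z : R}
    (hdiag : ∀ i, N i i = v i) (h01 : N 0 1 = z) (h10 : N 1 0 = z)
    (hoff : ∀ i j, i ≠ j → ¬(i = 0 ∧ j = 1) → ¬(i = 1 ∧ j = 0) → N i j = 0) :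
    N = diagonal v + single 0 1 z + single 1 0 z := by
  ext i j
  simp only [Matrix.add_apply, diagonal_apply, single_apply]
  by_cases hij01 : i = 0 ∧ j = 1
  · obtain ⟨rfl, rfl⟩ := hij01
    simp [h01]
  by_cases hij10 : i = 1 ∧ j = 0
  · obtain ⟨rfl, rfl⟩ := hij10
    simp [h10]
  have h01' : ¬(0 = i ∧ 1 = j) := fun h => hij01 ⟨h.1.symm, h.2.symm⟩
  have h10' : ¬(1 = i ∧ 0 = j) := fun h => hij10 ⟨h.1.symm, h.2.symm⟩
  rw [if_neg h01', if_neg h10', add_zero, add_zero]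
  by_cases hij : i = j
  · subst hij
    rw [hdiag, if_pos rfl]
  · rw [hoff i j hij hij01 hij10, if_neg hij]

namespace IsHermitian

section

variable {n : Type*} [Fintype n] [DecidableEq n] {A : Matrix n n ℝ}

theorem dotProduct_mulVec_eq_sum_eigenvalues (hA : A.IsHermitian) (x : n → ℝ) :
    x ⬝ᵥ A *ᵥ x = ∑ i, hA.eigenvalues i * hA.eigenvectorBasis.repr (toLp 2 x) i ^ 2 := by
  set b := hA.eigenvectorBasis
  have hcoord (i : n) :
      inner ℝ (b i) (toLp 2 (A *ᵥ x)) = hA.eigenvalues i * inner ℝ (b i) (toLp 2 x) := by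
    have := (isSymmetric_toEuclideanLin_iff.mpr hA) (b i) (toLp 2 x)
    rw [toLpLin_apply, toLpLin_apply, ofLp_toLp, mulVec_eigenvectorBasis] at this
    rw [← this, toLp_smul, toLp_ofLp, inner_smul_left]
    rfl
  have hquad : x ⬝ᵥ A *ᵥ x = inner ℝ (toLp 2 x) (toLp 2 (A *ᵥ x)) := by
    rw [EuclideanSpace.inner_toLp_toLp, star_trivial, dotProduct_comm]
  rw [hquad, ← b.sum_inner_mul_inner]
  refine Finset.sum_congr rfl fun i _ => ?_
  rw [hcoord, real_inner_comm, b.repr_apply_apply]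
  ring

theorem exists_eigenvalues_pos_of_dotProduct_mulVec_pos (hA : A.IsHermitian) {x : n → ℝ}
    (hx : 0 < x ⬝ᵥ A *ᵥ x) : ∃ i, 0 < hA.eigenvalues i := by
  by_contra! h
  rw [hA.dotProduct_mulVec_eq_sum_eigenvalues] at hx
  exact hx.not_ge <| Finset.sum_nonpos fun i _ =>
    mul_nonpos_of_nonpos_of_nonneg (h i) (sq_nonneg _)

theorem finrank_le_card_eigenvalues_neg (hA : A.IsHermitian) (W : Submodule ℝ (n → ℝ))
    (hW : ∀ x ∈ W, x ≠ 0 → x ⬝ᵥ A *ᵥ x < 0) :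
    finrank ℝ W ≤ Nat.card {i // hA.eigenvalues i < 0} := by
  refine Basis.finrank_le_card_of_repr_eq_zero
    (hA.eigenvectorBasis.toBasis.map (WithLp.linearEquiv 2 ℝ (n → ℝ))) _ W fun x hxW hx => ?_
  by_contra hx0
  refine (hW x hxW hx0).not_ge ?_
  rw [hA.dotProduct_mulVec_eq_sum_eigenvalues]
  refine Finset.sum_nonneg fun i _ => ?_
  rcases lt_or_ge (hA.eigenvalues i) 0 with h | h
  · rw [show hA.eigenvectorBasis.repr (toLp 2 x) i = 0 from hx i h]
    simp
  · positivity

end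

theorem le_card_eigenvalues_neg_of_submatrix_succ {k : ℕ}
    {A : Matrix (Fin (k + 1)) (Fin (k + 1)) ℝ} (hA : A.IsHermitian)
    (hneg : ∀ y, y ≠ 0 → y ⬝ᵥ A.submatrix Fin.succ Fin.succ *ᵥ y < 0) :
    k ≤ Nat.card {i // hA.eigenvalues i < 0} := by
  let π : Module.Dual ℝ (Fin (k + 1) → ℝ) := LinearMap.proj 0
  have hπ : π ≠ 0 := fun h => by simpa [π] using LinearMap.congr_fun h 1
  have hker : finrank ℝ (LinearMap.ker π) = k := by
    have := Module.Dual.finrank_ker_add_one_of_ne_zero hπ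
    rw [Module.finrank_fin_fun] at this
    exact Nat.add_right_cancel this
  refine hker.ge.trans <| hA.finrank_le_card_eigenvalues_neg _ fun x hxπ hx => ?_
  have hx0 : x 0 = 0 := LinearMap.mem_ker.mp hxπ
  rw [dotProduct_mulVec_eq_submatrix_succ_of_apply_zero A hx0]
  refine hneg _ fun htail => hx ?_
  rw [← Fin.cons_self_tail x, htail, hx0]
  exact cons_zero_zero

end IsHermitian

end Matrix

/-- The `n × n` matrix (`n = m + 3 ≥ 3`) which is the arrowhead matrix with
first row/column `d_1, …, d_{n-1}` (all positive) and diagonal `-2 d_1, …, -2 d_{n-1}`,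
modified by putting `z` (with `|z| < 2 · min d_1 d_2`) in positions `(2,3)` and `(3,2)`,
has exactly 1 positive and `n - 1` negative eigenvalues. -/
theorem perturbed_arrowhead_inertia (m : ℕ) (d : Fin (m + 2) → ℝ) (hd : ∀ i, 0 < d i)
    (z : ℝ) (hz : |z| < 2 * min (d 0) (d 1))
    (M : Matrix (Fin (m + 3)) (Fin (m + 3)) ℝ)
    (hM00 : M 0 0 = 0)
    (hMrow : ∀ i : Fin (m + 2), M 0 i.succ = d i)
    (hMcol : ∀ i : Fin (m + 2), M i.succ 0 = d i)
    (hMdiag : ∀ i : Fin (m + 2), M i.succ i.succ = -2 * d i)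
    (hMz : M (0 : Fin (m + 2)).succ (1 : Fin (m + 2)).succ = z)
    (hMz' : M (1 : Fin (m + 2)).succ (0 : Fin (m + 2)).succ = z)
    (hMoff : ∀ i j : Fin (m + 2), i ≠ j → ¬(i = 0 ∧ j = 1) → ¬(i = 1 ∧ j = 0) →
      M i.succ j.succ = 0)
    (hM : M.IsHermitian) :
    posEig hM = 1 ∧ zeroEig hM = 0 ∧ negEig hM = m + 2 := by
  have hcount := Nat.card_pos_add_card_eq_zero_add_card_neg hM.eigenvalues
  rw [Fintype.card_fin] at hcount
  have hpos : 0 < posEig hM := by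
    obtain ⟨i, hi⟩ := hM.exists_eigenvalues_pos_of_dotProduct_mulVec_pos
      (x := Pi.single 0 2 + Pi.single (0 : Fin (m + 2)).succ 1) <| by
        rw [single_add_single_dotProduct_mulVec_s8, hM00, hMrow, hMcol, hMdiag]
        linarith [hd 0]
    exact Nat.card_pos_iff.mpr ⟨⟨⟨i, hi⟩⟩, inferInstance⟩
  have hblock : M.submatrix Fin.succ Fin.succ =
      diagonal (fun i => -2 * d i) + single 0 1 z + single 1 0 z :=
    eq_diagonal_add_single_add_single hMdiag hMz hMz' hMoff
  have hneg : m + 2 ≤ negEig hM := hM.le_card_eigenvalues_neg_of_submatrix_succ fun y hy =>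
    hblock ▸ dotProduct_diagonal_add_single_mulVec_neg hd hz hy
  unfold posEig zeroEig negEig at *
  omega
end
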